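/- Let K be an algebraically closed field of characteristic 0, let ζ ∈ K be a primitive cube root of unity, let b ∈ K, and let F_b : K³ → K³ be the polynomial map F_b(X,Y,Z) = (X² + bYZ, Z², Y²). Then: (i) F_b(v) ≠ 0 for every v ∈ K³ with v ≠ 0 (so F_b defines a morphism P² → P²); and (ii) Aut(F_b) is exactly the subgroup of PGL₃(K) of order 6 generated by the class [diag(1, ζ, ζ²)] and the class of the permutation matrix exchanging the second and third standard basis vectors; this subgroup is isomorphic to the symmetric group S₃. -/

import Mathlib

open Matrix MvPolynomial
open scoped Classical

noncomputable section

/-- `PGL₃(K)`: the quotient of `GL₃(K)` by its center (the nonzero scalar matrices). -/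
abbrev PGL3 (K : Type*) [Field K] : Type _ :=
  GL (Fin 3) K ⧸ Subgroup.center (GL (Fin 3) K)

/-- The class in `PGL₃(K)` of a matrix (sent to `1` if the matrix is not invertible). -/
def toPGL3 {K : Type*} [Field K] (M : Matrix (Fin 3) (Fin 3) K) : PGL3 K :=
  if h : M.det ≠ 0 then
    QuotientGroup.mk (Matrix.GeneralLinearGroup.mkOfDetNeZero M h) else 1

/-- The automorphism group (as a set of classes in `PGL₃(K)`) of a polynomial self-map
`F` of `K³`: the classes `[M]` such that `F(M·v) = c·M·F(v)` for some `c ≠ 0` and all `v`. -/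
def AutQ {K : Type*} [Field K] (F : (Fin 3 → K) → (Fin 3 → K)) : Set (PGL3 K) :=
  {φ | ∃ M : GL (Fin 3) K, (QuotientGroup.mk M : PGL3 K) = φ ∧
    ∃ c : K, c ≠ 0 ∧ ∀ v : Fin 3 → K,
      F ((M : Matrix (Fin 3) (Fin 3) K) *ᵥ v) = c • ((M : Matrix (Fin 3) (Fin 3) K) *ᵥ F v)}

/-- Two polynomial self-maps of `K³` are `PGL₃(K)`-conjugate. -/
def PGLConj {K : Type*} [Field K] (F F' : (Fin 3 → K) → (Fin 3 → K)) : Prop :=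
  ∃ (M : Matrix (Fin 3) (Fin 3) K) (c : K), M.det ≠ 0 ∧ c ≠ 0 ∧
    ∀ v : Fin 3 → K, F (M *ᵥ v) = c • (M *ᵥ F' v)

/-- The `n`-fold composite of the polynomial self-map of `K³` whose coordinates are the
polynomials `P 0, P 1, P 2`, as a triple of polynomials (the `0`-th iterate is the identity). -/
def iterComp {K : Type*} [CommSemiring K] (P : Fin 3 → MvPolynomial (Fin 3) K) :
    ℕ → Fin 3 → MvPolynomial (Fin 3) K
  | 0 => fun i => MvPolynomial.X i
  | n + 1 => fun i => MvPolynomial.aeval (iterComp P n) (P i)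

namespace Stmt18Aux

variable {K : Type*} [Field K]

/-- The scalar matrix `c • 1` as an element of `GL₃`. -/
def scalarGL (c : K) (hc : c ≠ 0) : GL (Fin 3) K :=
  ⟨c • (1 : Matrix (Fin 3) (Fin 3) K), c⁻¹ • 1,
   by rw [Matrix.smul_mul, Matrix.one_mul, smul_smul, mul_inv_cancel₀ hc, one_smul],
   by rw [Matrix.smul_mul, Matrix.one_mul, smul_smul, inv_mul_cancel₀ hc, one_smul]⟩

lemma scalarGL_mem_center (c : K) (hc : c ≠ 0) :
    scalarGL c hc ∈ Subgroup.center (GL (Fin 3) K) := by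
  rw [Subgroup.mem_center_iff]
  intro g
  apply Units.ext
  show (g : Matrix (Fin 3) (Fin 3) K) * (c • 1) = (c • 1) * (g : Matrix (Fin 3) (Fin 3) K)
  rw [Matrix.mul_smul, Matrix.smul_mul, Matrix.mul_one, Matrix.one_mul]

lemma mk_eq_of_smul (M N : GL (Fin 3) K) (c : K) (hc : c ≠ 0)
    (h : (M : Matrix (Fin 3) (Fin 3) K) = c • (N : Matrix (Fin 3) (Fin 3) K)) :
    (QuotientGroup.mk M : PGL3 K) = QuotientGroup.mk N := by
  have hM : M = scalarGL c hc * N := by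
    apply Units.ext
    rw [Units.val_mul]
    show (M : Matrix (Fin 3) (Fin 3) K) = (c • 1) * (N : Matrix (Fin 3) (Fin 3) K)
    rw [Matrix.smul_mul, Matrix.one_mul]
    exact h
  rw [hM, QuotientGroup.mk_mul,
    (QuotientGroup.eq_one_iff _).2 (scalarGL_mem_center c hc), one_mul]

lemma toPGL3_mk (M : GL (Fin 3) K) :
    toPGL3 (M : Matrix (Fin 3) (Fin 3) K) = QuotientGroup.mk M := by
  have h : ((M : Matrix (Fin 3) (Fin 3) K)).det ≠ 0 := by
    have : IsUnit (M : Matrix (Fin 3) (Fin 3) K) := ⟨M, rfl⟩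
    exact ((Matrix.isUnit_iff_isUnit_det _).1 this).ne_zero
  rw [toPGL3, dif_pos h]
  exact congrArg _ (Units.ext rfl)

lemma classify [CharZero K] (b : K) (M : Matrix (Fin 3) (Fin 3) K)
    (hdet : M.det ≠ 0) (c : K) (hc : c ≠ 0)
    (hv : ∀ v : Fin 3 → K,
      (fun v : Fin 3 → K => ![v 0 ^ 2 + b * (v 1 * v 2), v 2 ^ 2, v 1 ^ 2]) (M *ᵥ v)
        = c • (M *ᵥ (fun v : Fin 3 → K => ![v 0 ^ 2 + b * (v 1 * v 2), v 2 ^ 2, v 1 ^ 2]) v)) :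
    ∃ ω : K, ω ^ 3 = 1 ∧ (M = c • Matrix.diagonal ![1, ω, ω ^ 2] ∨
      M = c • !![1,0,0; 0,0,ω; 0,(ω:K)^2,0]) := by
  have A1 : M 2 0 ^ 2 = c * M 1 0 := by
    have h := congrFun (hv ![1,0,0]) 1
    simp [Matrix.mulVec, dotProduct, Fin.sum_univ_three] at h; linear_combination h
  have B1 : M 1 0 ^ 2 = c * M 2 0 := by
    have h := congrFun (hv ![1,0,0]) 2
    simp [Matrix.mulVec, dotProduct, Fin.sum_univ_three] at h; linear_combination h
  have C1 : M 0 0 ^ 2 + b * (M 1 0 * M 2 0) = c * M 0 0 := by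
    have h := congrFun (hv ![1,0,0]) 0
    simp [Matrix.mulVec, dotProduct, Fin.sum_univ_three] at h; linear_combination h
  have A2 : M 2 1 ^ 2 = c * M 1 2 := by
    have h := congrFun (hv ![0,1,0]) 1
    simp [Matrix.mulVec, dotProduct, Fin.sum_univ_three] at h; linear_combination h
  have B2 : M 1 1 ^ 2 = c * M 2 2 := by
    have h := congrFun (hv ![0,1,0]) 2
    simp [Matrix.mulVec, dotProduct, Fin.sum_univ_three] at h; linear_combination h
  have C2 : M 0 1 ^ 2 + b * (M 1 1 * M 2 1) = c * M 0 2 := by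
    have h := congrFun (hv ![0,1,0]) 0
    simp [Matrix.mulVec, dotProduct, Fin.sum_univ_three] at h; linear_combination h
  have A3 : M 2 2 ^ 2 = c * M 1 1 := by
    have h := congrFun (hv ![0,0,1]) 1
    simp [Matrix.mulVec, dotProduct, Fin.sum_univ_three] at h; linear_combination h
  have B3 : M 1 2 ^ 2 = c * M 2 1 := by
    have h := congrFun (hv ![0,0,1]) 2
    simp [Matrix.mulVec, dotProduct, Fin.sum_univ_three] at h; linear_combination h
  have C3 : M 0 2 ^ 2 + b * (M 1 2 * M 2 2) = c * M 0 1 := by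
    have h := congrFun (hv ![0,0,1]) 0
    simp [Matrix.mulVec, dotProduct, Fin.sum_univ_three] at h; linear_combination h
  have A4 : M 2 0 * M 2 1 = 0 := by
    have h := congrFun (hv ![1,1,0]) 1
    simp [Matrix.mulVec, dotProduct, Fin.sum_univ_three] at h
    have h2 : (2:K) * (M 2 0 * M 2 1) = 0 := by linear_combination h - A1 - A2
    exact (mul_eq_zero.mp h2).resolve_left two_ne_zero
  have C4 : 2 * (M 0 0 * M 0 1) + b * (M 1 0 * M 2 1 + M 1 1 * M 2 0) = 0 := by
    have h := congrFun (hv ![1,1,0]) 0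
    simp [Matrix.mulVec, dotProduct, Fin.sum_univ_three] at h
    linear_combination h - C1 - C2
  have A5 : M 2 0 * M 2 2 = 0 := by
    have h := congrFun (hv ![1,0,1]) 1
    simp [Matrix.mulVec, dotProduct, Fin.sum_univ_three] at h
    have h2 : (2:K) * (M 2 0 * M 2 2) = 0 := by linear_combination h - A1 - A3
    exact (mul_eq_zero.mp h2).resolve_left two_ne_zero
  have C5 : 2 * (M 0 0 * M 0 2) + b * (M 1 0 * M 2 2 + M 1 2 * M 2 0) = 0 := by
    have h := congrFun (hv ![1,0,1]) 0
    simp [Matrix.mulVec, dotProduct, Fin.sum_univ_three] at h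
    linear_combination h - C1 - C3
  have A6 : 2 * (M 2 1 * M 2 2) = c * b * M 1 0 := by
    have h := congrFun (hv ![0,1,1]) 1
    simp [Matrix.mulVec, dotProduct, Fin.sum_univ_three] at h
    linear_combination h - A2 - A3
  have h20 : M 2 0 = 0 := by
    by_contra h20
    have h21 : M 2 1 = 0 := (mul_eq_zero.mp A4).resolve_left h20
    have h22 : M 2 2 = 0 := (mul_eq_zero.mp A5).resolve_left h20
    have h12 : M 1 2 = 0 := by
      have : c * M 1 2 = 0 := by rw [← A2, h21]; ring
      exact (mul_eq_zero.mp this).resolve_left hc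
    have h11 : M 1 1 = 0 := by
      have : c * M 1 1 = 0 := by rw [← A3, h22]; ring
      exact (mul_eq_zero.mp this).resolve_left hc
    exact hdet (by rw [Matrix.det_fin_three, h11, h12, h21, h22]; ring)
  have h10 : M 1 0 = 0 := by
    have : M 1 0 ^ 2 = 0 := by rw [B1, h20]; ring
    exact pow_eq_zero_iff two_ne_zero |>.mp this
  have hsplit : M 2 1 = 0 ∨ M 2 2 = 0 := by
    apply mul_eq_zero.mp
    have h2 : (2:K) * (M 2 1 * M 2 2) = 0 := by rw [A6, h10]; ring
    exact (mul_eq_zero.mp h2).resolve_left two_ne_zero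
  have ha00 : M 0 0 = 0 ∨ M 0 0 = c := by
    have : M 0 0 * (M 0 0 - c) = 0 := by linear_combination C1 - b * M 2 0 * h10
    rcases mul_eq_zero.mp this with h | h
    · exact Or.inl h
    · exact Or.inr (sub_eq_zero.mp h)
  have hcol0 : M 0 0 = c := by
    rcases ha00 with h | h
    · exact absurd (by rw [Matrix.det_fin_three, h, h10, h20]; ring) hdet
    · exact h
  have ha01 : M 0 1 = 0 := by
    have h2 : (2:K) * (c * M 0 1) = 0 := by
      linear_combination C4 - 2 * M 0 1 * hcol0 - b * M 2 1 * h10 - b * M 1 1 * h20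
    exact ((mul_eq_zero.mp ((mul_eq_zero.mp h2).resolve_left two_ne_zero)).resolve_left hc)
  have ha02 : M 0 2 = 0 := by
    have h2 : (2:K) * (c * M 0 2) = 0 := by
      linear_combination C5 - 2 * M 0 2 * hcol0 - b * M 2 2 * h10 - b * M 1 2 * h20
    exact ((mul_eq_zero.mp ((mul_eq_zero.mp h2).resolve_left two_ne_zero)).resolve_left hc)
  rcases hsplit with h21 | h22
  · -- diagonal case
    have h12 : M 1 2 = 0 := by
      have : c * M 1 2 = 0 := by rw [← A2, h21]; ring
      exact (mul_eq_zero.mp this).resolve_left hc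
    have h22ne : M 2 2 ≠ 0 := by
      intro h22
      have h11 : M 1 1 = 0 := by
        have : M 1 1 ^ 2 = 0 := by rw [B2, h22, mul_zero]
        exact pow_eq_zero_iff two_ne_zero |>.mp this
      exact hdet (by rw [Matrix.det_fin_three, h10, h11, h12, h21]; ring)
    have h11ne : M 1 1 ≠ 0 := by
      intro h11; exact h22ne (by
        have : M 2 2 ^ 2 = 0 := by rw [A3, h11, mul_zero]
        exact pow_eq_zero_iff two_ne_zero |>.mp this)
    refine ⟨M 1 1 / c, ?_, Or.inl ?_⟩
    · have hcube : M 1 1 ^ 3 = c ^ 3 := by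
        have h4 : M 1 1 ^ 4 = c ^ 3 * M 1 1 := by
          linear_combination (M 1 1 ^2 + c * M 2 2) * B2 + c^2 * A3
        exact mul_right_cancel₀ h11ne (by linear_combination h4 : M 1 1 ^ 3 * M 1 1 = c ^ 3 * M 1 1)
      field_simp
      linear_combination hcube
    · ext i j
      fin_cases i <;> fin_cases j <;>
        simp [Matrix.smul_apply, Matrix.diagonal_apply, hcol0, ha01, ha02, h10, h12, h20, h21] <;>
        (field_simp; try linear_combination (-1 : K) * B2)
  · -- anti-diagonal case
    have h11 : M 1 1 = 0 := by
      have : M 1 1 ^ 2 = 0 := by rw [B2, h22, mul_zero]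
      exact pow_eq_zero_iff two_ne_zero |>.mp this
    have h21ne : M 2 1 ≠ 0 := by
      intro h21
      have h12 : M 1 2 = 0 := by
        have : M 1 2 ^ 2 = 0 := by rw [B3, h21, mul_zero]
        exact pow_eq_zero_iff two_ne_zero |>.mp this
      exact hdet (by rw [Matrix.det_fin_three, h10, h11, h12, h22]; ring)
    have h12ne : M 1 2 ≠ 0 := by
      intro h12; exact h21ne (by
        have : M 2 1 ^ 2 = 0 := by rw [A2, h12, mul_zero]
        exact pow_eq_zero_iff two_ne_zero |>.mp this)
    refine ⟨M 1 2 / c, ?_, Or.inr ?_⟩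
    · have hcube : M 1 2 ^ 3 = c ^ 3 := by
        have h4 : M 1 2 ^ 4 = c ^ 3 * M 1 2 := by
          linear_combination (M 1 2 ^2 + c * M 2 1) * B3 + c^2 * A2
        exact mul_right_cancel₀ h12ne (by linear_combination h4 : M 1 2 ^ 3 * M 1 2 = c ^ 3 * M 1 2)
      field_simp
      linear_combination hcube
    · ext i j
      fin_cases i <;> fin_cases j <;>
        simp [Matrix.smul_apply, Matrix.vecHead, Matrix.vecTail, hcol0, ha01, ha02, h10, h11,
          h20, h22] <;>
        (field_simp; try linear_combination (-1 : K) * B3)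

/-- The permutation matrix of `σ` (columns permuted by `σ`). -/
def permM (σ : Equiv.Perm (Fin 3)) : Matrix (Fin 3) (Fin 3) K :=
  Matrix.of fun i j => if σ j = i then 1 else 0

lemma permM_one : (permM 1 : Matrix (Fin 3) (Fin 3) K) = 1 := by
  ext i j
  simp [permM, Matrix.one_apply, eq_comm]

lemma permM_mul (σ τ : Equiv.Perm (Fin 3)) :
    (permM (σ * τ) : Matrix (Fin 3) (Fin 3) K) = permM σ * permM τ := by
  ext i j
  rw [Matrix.mul_apply]
  rw [Finset.sum_eq_single (τ j)]
  · simp [permM, Equiv.Perm.mul_apply]; congr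
  · intro k _ hk
    simp [permM, Ne.symm hk]
  · simp

/-- The permutation representation `S₃ → GL₃(K)`. -/
def permGL : Equiv.Perm (Fin 3) →* GL (Fin 3) K where
  toFun σ := ⟨permM σ, permM σ⁻¹,
    by rw [← permM_mul, mul_inv_cancel, permM_one],
    by rw [← permM_mul, inv_mul_cancel, permM_one]⟩
  map_one' := Units.ext permM_one
  map_mul' σ τ := Units.ext (permM_mul σ τ)

lemma permGL_injective : Function.Injective (permGL (K := K)) := by
  intro σ τ h
  have h' : (permM σ : Matrix (Fin 3) (Fin 3) K) = permM τ := congrArg Units.val h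
  apply Equiv.ext
  intro j
  have := congrFun (congrFun h' (σ j)) j
  simp only [permM, Matrix.of_apply, eq_self_iff_true, if_true] at this
  by_cases hh : τ j = σ j
  · exact hh.symm
  · rw [if_neg hh] at this
    exact absurd this one_ne_zero


/-- `AutQ F` as a subgroup of `PGL₃(K)`. -/
def AutSub (F : (Fin 3 → K) → (Fin 3 → K)) : Subgroup (PGL3 K) where
  carrier := AutQ F
  one_mem' := ⟨1, rfl, 1, one_ne_zero, fun v => by
    show F ((1 : Matrix (Fin 3) (Fin 3) K) *ᵥ v) = (1:K) • ((1 : Matrix (Fin 3) (Fin 3) K) *ᵥ F v)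
    rw [Matrix.one_mulVec, Matrix.one_mulVec, one_smul]⟩
  mul_mem' := by
    rintro x y ⟨M, hM, c, hc, hMv⟩ ⟨N, hN, e, he, hNv⟩
    refine ⟨M * N, by rw [← hM, ← hN, QuotientGroup.mk_mul], c * e, mul_ne_zero hc he, fun v => ?_⟩
    rw [Units.val_mul, ← Matrix.mulVec_mulVec, hMv, hNv, Matrix.mulVec_smul, smul_smul,
      ← Matrix.mulVec_mulVec]
  inv_mem' := by
    rintro x ⟨M, hM, c, hc, hMv⟩
    refine ⟨M⁻¹, by rw [← hM, QuotientGroup.mk_inv], c⁻¹, inv_ne_zero hc, fun v => ?_⟩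
    have hMM : (M : Matrix (Fin 3) (Fin 3) K) * ((M⁻¹ : GL (Fin 3) K) : Matrix (Fin 3) (Fin 3) K)
        = 1 := by rw [← Units.val_mul, mul_inv_cancel, Units.val_one]
    have hMM' : ((M⁻¹ : GL (Fin 3) K) : Matrix (Fin 3) (Fin 3) K) * (M : Matrix (Fin 3) (Fin 3) K)
        = 1 := by rw [← Units.val_mul, inv_mul_cancel, Units.val_one]
    have h := hMv (((M⁻¹ : GL (Fin 3) K) : Matrix (Fin 3) (Fin 3) K) *ᵥ v)
    rw [Matrix.mulVec_mulVec, hMM, Matrix.one_mulVec] at h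
    rw [h, Matrix.mulVec_smul, Matrix.mulVec_mulVec, hMM', Matrix.one_mulVec, smul_smul,
      inv_mul_cancel₀ hc, one_smul]

end Stmt18Aux

open Stmt18Aux

theorem stmt18 {K : Type*} [Field K] [IsAlgClosed K] [CharZero K]
    (ζ : K) (hζ : IsPrimitiveRoot ζ 3) (b : K) :
    let F : (Fin 3 → K) → (Fin 3 → K) := fun v =>
      ![v 0 ^ 2 + b * (v 1 * v 2), v 2 ^ 2, v 1 ^ 2]
    let H : Subgroup (PGL3 K) :=
      Subgroup.closure
        {toPGL3 (Matrix.diagonal ![1, ζ, ζ ^ 2]), toPGL3 !![1,0,0; 0,0,1; 0,1,0]}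
    (∀ v : Fin 3 → K, v ≠ 0 → F v ≠ 0) ∧
      AutQ F = ↑H ∧ Nat.card H = 6 ∧ Nonempty (H ≃* Equiv.Perm (Fin 3)) := by
  intro F H
  have hz3 : ζ ^ 3 = 1 := hζ.pow_eq_one
  have hzne1 : ζ ≠ 1 := hζ.ne_one (by norm_num)
  have hz0 : ζ ≠ 0 := by
    intro h
    rw [h] at hz3
    simp at hz3
  have hsum : 1 + ζ + ζ ^ 2 = 0 := by
    have h1 : (ζ - 1) * (1 + ζ + ζ ^ 2) = 0 := by linear_combination hz3
    exact (mul_eq_zero.mp h1).resolve_left (sub_ne_zero.mpr hzne1)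
  -- cube roots of unity
  have hroots : ∀ ω : K, ω ^ 3 = 1 → ω = 1 ∨ ω = ζ ∨ ω = ζ ^ 2 := by
    intro ω hω
    have h1 : (ω - 1) * ((ω - ζ) * (ω - ζ ^ 2)) = 0 := by
      linear_combination hω - ω^2 * hsum + ω*ζ*hsum - hz3
    rcases mul_eq_zero.mp h1 with h | h
    · exact Or.inl (sub_eq_zero.mp h)
    · rcases mul_eq_zero.mp h with h' | h'
      · exact Or.inr (Or.inl (sub_eq_zero.mp h'))
      · exact Or.inr (Or.inr (sub_eq_zero.mp h'))
  -- part (i)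
  have part1 : ∀ v : Fin 3 → K, v ≠ 0 → F v ≠ 0 := by
    intro v hv hF
    apply hv
    have h0 := congrFun hF 0
    have h1 := congrFun hF 1
    have h2 := congrFun hF 2
    rw [show F v = ![v 0 ^ 2 + b * (v 1 * v 2), v 2 ^ 2, v 1 ^ 2] from rfl] at h0 h1 h2
    simp at h0 h1 h2
    have hv2 : v 2 = 0 := h1
    have hv1 : v 1 = 0 := h2
    have hv0 : v 0 = 0 := by
      rw [hv1] at h0
      simp at h0
      exact h0
    funext i
    fin_cases i <;> simp [hv0, hv1, hv2]
  -- the two generating matrices and their GL versions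
  have hdetD : (Matrix.diagonal ![1, ζ, ζ ^ 2] : Matrix (Fin 3) (Fin 3) K).det ≠ 0 := by
    have h : (Matrix.diagonal ![1, ζ, ζ ^ 2] : Matrix (Fin 3) (Fin 3) K).det = 1 := by
      rw [Matrix.det_diagonal, Fin.prod_univ_three]
      show (1:K) * ζ * ζ ^ 2 = 1
      linear_combination hz3
    rw [h]; exact one_ne_zero
  have hdetP : (!![1,0,0; 0,0,1; 0,1,0] : Matrix (Fin 3) (Fin 3) K).det ≠ 0 := by
    rw [Matrix.det_fin_three]; simp
  let DU : GL (Fin 3) K := Matrix.GeneralLinearGroup.mkOfDetNeZero _ hdetD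
  let PU : GL (Fin 3) K := Matrix.GeneralLinearGroup.mkOfDetNeZero _ hdetP
  have hDUval : (DU : Matrix (Fin 3) (Fin 3) K) = Matrix.diagonal ![1, ζ, ζ ^ 2] := rfl
  have hPUval : (PU : Matrix (Fin 3) (Fin 3) K) = !![1,0,0; 0,0,1; 0,1,0] := rfl
  have hdmk : toPGL3 (Matrix.diagonal ![1, ζ, ζ ^ 2]) = (QuotientGroup.mk DU : PGL3 K) :=
    toPGL3_mk DU
  have hpmk : toPGL3 (!![1,0,0; 0,0,1; 0,1,0] : Matrix (Fin 3) (Fin 3) K)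
      = (QuotientGroup.mk PU : PGL3 K) := toPGL3_mk PU
  have hdH : (QuotientGroup.mk DU : PGL3 K) ∈ H := by
    rw [← hdmk]; exact Subgroup.subset_closure (Set.mem_insert _ _)
  have hpH : (QuotientGroup.mk PU : PGL3 K) ∈ H := by
    rw [← hpmk]; exact Subgroup.subset_closure (Set.mem_insert_of_mem _ rfl)
  -- the generators are automorphisms
  have hDgen : ∀ v : Fin 3 → K,
      (fun v : Fin 3 → K => ![v 0 ^ 2 + b * (v 1 * v 2), v 2 ^ 2, v 1 ^ 2])
          ((Matrix.diagonal ![1,ζ,ζ^2] : Matrix (Fin 3) (Fin 3) K) *ᵥ v)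
        = (1:K) • ((Matrix.diagonal ![1,ζ,ζ^2] : Matrix (Fin 3) (Fin 3) K) *ᵥ
          (fun v : Fin 3 → K => ![v 0 ^ 2 + b * (v 1 * v 2), v 2 ^ 2, v 1 ^ 2]) v) := by
    intro v
    have h0 : ((fun v : Fin 3 → K => ![v 0 ^ 2 + b * (v 1 * v 2), v 2 ^ 2, v 1 ^ 2])
          ((Matrix.diagonal ![1,ζ,ζ^2] : Matrix (Fin 3) (Fin 3) K) *ᵥ v)) 0
        = ((1:K) • ((Matrix.diagonal ![1,ζ,ζ^2] : Matrix (Fin 3) (Fin 3) K) *ᵥ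
          (fun v : Fin 3 → K => ![v 0 ^ 2 + b * (v 1 * v 2), v 2 ^ 2, v 1 ^ 2]) v)) 0 := by
      simp [Matrix.mulVec_diagonal, -mul_eq_mul_left_iff, -mul_eq_mul_right_iff]
      linear_combination b * v 1 * v 2 * hz3
    have h1 : ((fun v : Fin 3 → K => ![v 0 ^ 2 + b * (v 1 * v 2), v 2 ^ 2, v 1 ^ 2])
          ((Matrix.diagonal ![1,ζ,ζ^2] : Matrix (Fin 3) (Fin 3) K) *ᵥ v)) 1
        = ((1:K) • ((Matrix.diagonal ![1,ζ,ζ^2] : Matrix (Fin 3) (Fin 3) K) *ᵥ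
          (fun v : Fin 3 → K => ![v 0 ^ 2 + b * (v 1 * v 2), v 2 ^ 2, v 1 ^ 2]) v)) 1 := by
      simp [Matrix.mulVec_diagonal, -mul_eq_mul_left_iff, -mul_eq_mul_right_iff]
      linear_combination ζ * v 2 ^ 2 * hz3
    have h2 : ((fun v : Fin 3 → K => ![v 0 ^ 2 + b * (v 1 * v 2), v 2 ^ 2, v 1 ^ 2])
          ((Matrix.diagonal ![1,ζ,ζ^2] : Matrix (Fin 3) (Fin 3) K) *ᵥ v)) 2
        = ((1:K) • ((Matrix.diagonal ![1,ζ,ζ^2] : Matrix (Fin 3) (Fin 3) K) *ᵥ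
          (fun v : Fin 3 → K => ![v 0 ^ 2 + b * (v 1 * v 2), v 2 ^ 2, v 1 ^ 2]) v)) 2 := by
      simp [Matrix.mulVec_diagonal, -mul_eq_mul_left_iff, -mul_eq_mul_right_iff]
      ring
    funext i; fin_cases i
    exacts [h0, h1, h2]
  have hDaut : ∀ v : Fin 3 → K,
      F ((DU : Matrix (Fin 3) (Fin 3) K) *ᵥ v)
        = (1:K) • ((DU : Matrix (Fin 3) (Fin 3) K) *ᵥ F v) := by
    intro v
    rw [hDUval]
    exact hDgen v
  have hPgen : ∀ v : Fin 3 → K,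
      (fun v : Fin 3 → K => ![v 0 ^ 2 + b * (v 1 * v 2), v 2 ^ 2, v 1 ^ 2])
          ((!![1,0,0; 0,0,1; 0,1,0] : Matrix (Fin 3) (Fin 3) K) *ᵥ v)
        = (1:K) • ((!![1,0,0; 0,0,1; 0,1,0] : Matrix (Fin 3) (Fin 3) K) *ᵥ
          (fun v : Fin 3 → K => ![v 0 ^ 2 + b * (v 1 * v 2), v 2 ^ 2, v 1 ^ 2]) v) := by
    intro v
    have h0 : ((fun v : Fin 3 → K => ![v 0 ^ 2 + b * (v 1 * v 2), v 2 ^ 2, v 1 ^ 2])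
          ((!![1,0,0; 0,0,1; 0,1,0] : Matrix (Fin 3) (Fin 3) K) *ᵥ v)) 0
        = ((1:K) • ((!![1,0,0; 0,0,1; 0,1,0] : Matrix (Fin 3) (Fin 3) K) *ᵥ
          (fun v : Fin 3 → K => ![v 0 ^ 2 + b * (v 1 * v 2), v 2 ^ 2, v 1 ^ 2]) v)) 0 := by
      simp [Matrix.mulVec, dotProduct, Fin.sum_univ_three,
        -mul_eq_mul_left_iff, -mul_eq_mul_right_iff]
      ring
    have h1 : ((fun v : Fin 3 → K => ![v 0 ^ 2 + b * (v 1 * v 2), v 2 ^ 2, v 1 ^ 2])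
          ((!![1,0,0; 0,0,1; 0,1,0] : Matrix (Fin 3) (Fin 3) K) *ᵥ v)) 1
        = ((1:K) • ((!![1,0,0; 0,0,1; 0,1,0] : Matrix (Fin 3) (Fin 3) K) *ᵥ
          (fun v : Fin 3 → K => ![v 0 ^ 2 + b * (v 1 * v 2), v 2 ^ 2, v 1 ^ 2]) v)) 1 := by
      simp [Matrix.mulVec, dotProduct, Fin.sum_univ_three,
        -mul_eq_mul_left_iff, -mul_eq_mul_right_iff]
    have h2 : ((fun v : Fin 3 → K => ![v 0 ^ 2 + b * (v 1 * v 2), v 2 ^ 2, v 1 ^ 2])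
          ((!![1,0,0; 0,0,1; 0,1,0] : Matrix (Fin 3) (Fin 3) K) *ᵥ v)) 2
        = ((1:K) • ((!![1,0,0; 0,0,1; 0,1,0] : Matrix (Fin 3) (Fin 3) K) *ᵥ
          (fun v : Fin 3 → K => ![v 0 ^ 2 + b * (v 1 * v 2), v 2 ^ 2, v 1 ^ 2]) v)) 2 := by
      simp [Matrix.mulVec, dotProduct, Fin.sum_univ_three,
        -mul_eq_mul_left_iff, -mul_eq_mul_right_iff]
    funext i; fin_cases i
    exacts [h0, h1, h2]
  have hPaut : ∀ v : Fin 3 → K,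
      F ((PU : Matrix (Fin 3) (Fin 3) K) *ᵥ v)
        = (1:K) • ((PU : Matrix (Fin 3) (Fin 3) K) *ᵥ F v) := by
    intro v
    rw [hPUval]
    exact hPgen v
  -- products of the generators
  have hDD : ((DU * DU : GL (Fin 3) K) : Matrix (Fin 3) (Fin 3) K)
      = Matrix.diagonal ![1, ζ ^ 2, (ζ ^ 2) ^ 2] := by
    rw [Units.val_mul, hDUval, Matrix.diagonal_mul_diagonal]
    ext i j
    fin_cases i <;> fin_cases j <;>
      simp [Matrix.diagonal_apply, Matrix.vecHead, Matrix.vecTail] <;> ring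
  have hmulDP : ∀ u w : K,
      (Matrix.diagonal ![1, u, w] : Matrix (Fin 3) (Fin 3) K) * !![1,0,0; 0,0,1; 0,1,0]
        = !![1,0,0; 0,0,u; 0,w,0] := by
    intro u w
    ext i j
    fin_cases i <;> fin_cases j <;>
      simp [Matrix.mul_apply, Fin.sum_univ_three, Matrix.diagonal, Matrix.vecHead, Matrix.vecTail]
  -- Aut F = H
  have hAeq : AutSub F = H := by
    apply le_antisymm
    · -- hard direction: classification
      rintro x ⟨M, hMx, c, hc, hMv⟩
      have hdet : ((M : Matrix (Fin 3) (Fin 3) K)).det ≠ 0 := by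
        have : IsUnit (M : Matrix (Fin 3) (Fin 3) K) := ⟨M, rfl⟩
        exact ((Matrix.isUnit_iff_isUnit_det _).1 this).ne_zero
      obtain ⟨ω, hω3, hM | hM⟩ := classify b (M : Matrix (Fin 3) (Fin 3) K) hdet c hc hMv
      · rcases hroots ω hω3 with h1 | h1 | h1 <;> subst h1
        · -- identity
          have hid : (Matrix.diagonal ![1,(1:K),1^2] : Matrix (Fin 3) (Fin 3) K) = 1 := by
            ext i j
            fin_cases i <;> fin_cases j <;>
              simp [Matrix.diagonal_apply, Matrix.one_apply, Matrix.vecHead, Matrix.vecTail]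
          have hone : M = scalarGL c hc * 1 := by
            apply Units.ext
            rw [Units.val_mul, Units.val_one, Matrix.mul_one]
            show (M : Matrix (Fin 3) (Fin 3) K) = c • (1 : Matrix (Fin 3) (Fin 3) K)
            rw [hM, hid]
          have : x = 1 := by
            rw [← hMx, hone, QuotientGroup.mk_mul,
              (QuotientGroup.eq_one_iff _).2 (scalarGL_mem_center c hc), one_mul,
              QuotientGroup.mk_one]
          rw [this]; exact one_mem H
        · rw [← hMx, mk_eq_of_smul M DU c hc (by rw [hM, hDUval])]
          exact hdH
        · rw [← hMx, mk_eq_of_smul M (DU * DU) c hc (by rw [hM, hDD]),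
            QuotientGroup.mk_mul]
          exact mul_mem hdH hdH
      · rcases hroots ω hω3 with h1 | h1 | h1 <;> subst h1
        · rw [← hMx, mk_eq_of_smul M PU c hc (by rw [hM, hPUval]; norm_num)]
          exact hpH
        · rw [← hMx, mk_eq_of_smul M (DU * PU) c hc (by
            rw [hM, Units.val_mul, hDUval, hPUval, hmulDP]), QuotientGroup.mk_mul]
          exact mul_mem hdH hpH
        · rw [← hMx, mk_eq_of_smul M (DU * DU * PU) c hc (by
            rw [hM, Units.val_mul, hDD, hPUval, hmulDP]), QuotientGroup.mk_mul,
            QuotientGroup.mk_mul]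
          exact mul_mem (mul_mem hdH hdH) hpH
    · -- easy direction
      rw [Subgroup.closure_le]
      rintro x (rfl | rfl)
      · exact ⟨DU, (toPGL3_mk DU).symm, 1, one_ne_zero, hDaut⟩
      · exact ⟨PU, (toPGL3_mk PU).symm, 1, one_ne_zero, hPaut⟩
  have part2 : AutQ F = ↑H := by rw [← hAeq]; rfl
  -- the isomorphism with S₃ via conjugation by the Fourier matrix
  have hdetV : (!![1,1,1; 1,ζ,ζ^2; 1,ζ^2,ζ] : Matrix (Fin 3) (Fin 3) K).det ≠ 0 := by
    have h : (!![1,1,1; 1,ζ,ζ^2; 1,ζ^2,ζ] : Matrix (Fin 3) (Fin 3) K).det = 3 * (ζ * (ζ - 1)) := by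
      rw [Matrix.det_fin_three]
      simp [Matrix.vecHead, Matrix.vecTail]
      ring_nf
      linear_combination (-ζ) * hz3
    rw [h]
    exact mul_ne_zero (by norm_num) (mul_ne_zero hz0 (sub_ne_zero.mpr hzne1))
  let VU : GL (Fin 3) K := Matrix.GeneralLinearGroup.mkOfDetNeZero _ hdetV
  have hVUval : (VU : Matrix (Fin 3) (Fin 3) K) = !![1,1,1; 1,ζ,ζ^2; 1,ζ^2,ζ] := rfl
  let ψ : Equiv.Perm (Fin 3) →* PGL3 K :=
    (QuotientGroup.mk' (Subgroup.center (GL (Fin 3) K))).comp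
      ((MulAut.conj VU).toMonoidHom.comp permGL)
  have hψapp : ∀ σ : Equiv.Perm (Fin 3),
      ψ σ = (QuotientGroup.mk (VU * permGL σ * VU⁻¹) : PGL3 K) := fun σ => rfl
  -- injectivity
  have hψinj : Function.Injective ψ := by
    rw [injective_iff_map_eq_one]
    intro σ hσ
    have h2 : VU * permGL σ * VU⁻¹ ∈ Subgroup.center (GL (Fin 3) K) :=
      (QuotientGroup.eq_one_iff _).1 (by rw [← hψapp]; exact hσ)
    have h3 : permGL σ ∈ Subgroup.center (GL (Fin 3) K) := by
      have := Subgroup.Normal.conj_mem inferInstance _ h2 VU⁻¹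
      simpa [mul_assoc] using this
    -- commute with diag (1,2,4)
    have hdetW : (Matrix.diagonal ![1,2,4] : Matrix (Fin 3) (Fin 3) K).det ≠ 0 := by
      have h : (Matrix.diagonal ![1,2,4] : Matrix (Fin 3) (Fin 3) K).det = 8 := by
        rw [Matrix.det_diagonal, Fin.prod_univ_three]
        simp; norm_num
      rw [h]; norm_num
    set WU : GL (Fin 3) K := Matrix.GeneralLinearGroup.mkOfDetNeZero _ hdetW with hWU
    have hcomm := Subgroup.mem_center_iff.1 h3 WU
    have hmat : (Matrix.diagonal ![1,2,4] : Matrix (Fin 3) (Fin 3) K) * permM σ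
        = permM σ * Matrix.diagonal ![1,2,4] := congrArg Units.val hcomm
    have hdval : ∀ j : Fin 3, (![1,2,4] : Fin 3 → K) (σ j) = ![1,2,4] j := by
      intro j
      have := congrFun (congrFun hmat (σ j)) j
      rw [Matrix.diagonal_mul, Matrix.mul_diagonal] at this
      have h1 : (permM σ : Matrix (Fin 3) (Fin 3) K) (σ j) j = 1 := by
        simp [permM]
      rw [h1, mul_one, one_mul] at this
      exact this
    have hcases : ∀ i : Fin 3, i = 0 ∨ i = 1 ∨ i = 2 := by decide
    apply Equiv.ext
    intro j
    have hj := hdval j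
    rcases hcases (σ j) with h | h | h <;>
      rw [h] at hj <;> rw [h] <;> fin_cases j <;>
      first
        | rfl
        | simp at hj <;> norm_num at hj
  -- the image of ψ is H
  have hpermc3 : (permM (finRotate 3) : Matrix (Fin 3) (Fin 3) K) = !![0,0,1; 1,0,0; 0,1,0] := by
    ext i j
    fin_cases i <;> fin_cases j <;>
      simp [permM, Matrix.vecHead, Matrix.vecTail] <;> decide
  have hperms : (permM (Equiv.swap (1:Fin 3) 2) : Matrix (Fin 3) (Fin 3) K)
      = !![1,0,0; 0,0,1; 0,1,0] := by
    ext i j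
    fin_cases i <;> fin_cases j <;>
      simp [permM, Matrix.vecHead, Matrix.vecTail] <;> decide
  have hVC : (VU : Matrix (Fin 3) (Fin 3) K) * permM (finRotate 3)
      = (DU : Matrix (Fin 3) (Fin 3) K) * (VU : Matrix (Fin 3) (Fin 3) K) := by
    rw [hVUval, hDUval, hpermc3]
    ext i j
    fin_cases i <;> fin_cases j <;>
      simp [Matrix.mul_apply, Fin.sum_univ_three, Matrix.diagonal, Matrix.vecHead,
        Matrix.vecTail] <;>
      (first | ring1 | linear_combination hz3 | linear_combination (-1 : K) * hz3 | linear_combination ζ * hz3 | linear_combination (-ζ) * hz3)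
  have hVS : (VU : Matrix (Fin 3) (Fin 3) K) * permM (Equiv.swap (1:Fin 3) 2)
      = (PU : Matrix (Fin 3) (Fin 3) K) * (VU : Matrix (Fin 3) (Fin 3) K) := by
    rw [hVUval, hPUval, hperms]
    ext i j
    fin_cases i <;> fin_cases j <;>
      simp [Matrix.mul_apply, Fin.sum_univ_three, Matrix.vecHead, Matrix.vecTail]
  have hψc3 : ψ (finRotate 3) = (QuotientGroup.mk DU : PGL3 K) := by
    rw [hψapp]
    congr 1
    rw [mul_inv_eq_iff_eq_mul]
    apply Units.ext
    rw [Units.val_mul, Units.val_mul]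
    exact hVC
  have hψs : ψ (Equiv.swap (1:Fin 3) 2) = (QuotientGroup.mk PU : PGL3 K) := by
    rw [hψapp]
    congr 1
    rw [mul_inv_eq_iff_eq_mul]
    apply Units.ext
    rw [Units.val_mul, Units.val_mul]
    exact hVS
  have htop : (⊤ : Subgroup (Equiv.Perm (Fin 3)))
      = Subgroup.closure {finRotate 3, Equiv.swap (1:Fin 3) 2} := by
    apply le_antisymm
    · have hall : ∀ σ : Equiv.Perm (Fin 3), σ = 1 ∨ σ = finRotate 3 ∨ σ = (finRotate 3) ^ 2 ∨
          σ = Equiv.swap (1:Fin 3) 2 ∨ σ = finRotate 3 * Equiv.swap (1:Fin 3) 2 ∨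
          σ = (finRotate 3) ^ 2 * Equiv.swap (1:Fin 3) 2 := by decide
      intro σ _
      have hlist := hall σ
      have hc3 : finRotate 3 ∈ Subgroup.closure {finRotate 3, Equiv.swap (1:Fin 3) 2} :=
        Subgroup.subset_closure (Set.mem_insert _ _)
      have hsw : Equiv.swap (1:Fin 3) 2 ∈ Subgroup.closure {finRotate 3, Equiv.swap (1:Fin 3) 2} :=
        Subgroup.subset_closure (Set.mem_insert_of_mem _ rfl)
      rcases hlist with rfl | rfl | rfl | rfl | rfl | rfl
      · exact one_mem _
      · exact hc3
      · exact pow_mem hc3 2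
      · exact hsw
      · exact mul_mem hc3 hsw
      · exact mul_mem (pow_mem hc3 2) hsw
    · exact le_top
  have hψrange : ψ.range = H := by
    rw [MonoidHom.range_eq_map, htop, MonoidHom.map_closure]
    rw [Set.image_insert_eq, Set.image_singleton, hψc3, hψs, ← hdmk, ← hpmk]
  -- conclusion
  have e : H ≃* Equiv.Perm (Fin 3) :=
    (MulEquiv.subgroupCongr hψrange.symm).trans (MonoidHom.ofInjective hψinj).symm
  refine ⟨part1, part2, ?_, ⟨e⟩⟩
  have := Nat.card_congr e.toEquiv
  rw [this, Nat.card_eq_fintype_card]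
  simp [Fintype.card_perm]
  rfl
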